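/- arXiv:2005.00539 — 4 statements merged into one kernel-verified Lean document; each statement's English description precedes it below -/
import Mathlib

section
/- For a T0 space X, the following conditions are equivalent: (1) X is well-filtered; (2) the Smyth power space P_S(X) is a d-space; (3) the Smyth power space P_S(X) is well-filtered. -/
open Set Topology

universe u

variable {X : Type u}

/-- Specialization order: `x ≤ y` iff `x ∈ closure {y}`. -/
def specLE [TopologicalSpace X] (x y : X) : Prop := x ∈ closure ({y} : Set X)

/-- Directed subset w.r.t. the specialization order. -/
def dirOn [TopologicalSpace X] (D : Set X) : Prop :=
  D.Nonempty ∧ ∀ a ∈ D, ∀ b ∈ D, ∃ c ∈ D, specLE a c ∧ specLE b c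

/-- Downward closure w.r.t. the specialization order. -/
def dClo [TopologicalSpace X] (A : Set X) : Set X := {x | ∃ a ∈ A, specLE x a}

/-- Upward closure w.r.t. the specialization order. -/
def uClo [TopologicalSpace X] (A : Set X) : Set X := {x | ∃ a ∈ A, specLE a x}

/-- `x` is a supremum of `D` w.r.t. the specialization order. -/
def IsSupOf [TopologicalSpace X] (D : Set X) (x : X) : Prop :=
  (∀ d ∈ D, specLE d x) ∧ ∀ y, (∀ d ∈ D, specLE d y) → specLE x y

/-- A d-space: a T0 space in which every directed set (for the specialization order)
has a supremum, and every open set is inaccessible by directed suprema. -/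
def IsDSpace (X : Type u) [TopologicalSpace X] : Prop :=
  T0Space X ∧ (∀ D : Set X, dirOn D → ∃ x, IsSupOf D x) ∧
    ∀ D : Set X, dirOn D → ∀ x, IsSupOf D x →
      ∀ U : Set X, IsOpen U → x ∈ U → (D ∩ U).Nonempty

/-- A set is saturated if it is the intersection of the open sets containing it. -/
def IsSat [TopologicalSpace X] (A : Set X) : Prop :=
  A = ⋂₀ {U : Set X | IsOpen U ∧ A ⊆ U}

/-- The collection of nonempty compact saturated subsets. -/
def KSet (X : Type u) [TopologicalSpace X] : Set (Set X) :=
  {K | K.Nonempty ∧ IsCompact K ∧ IsSat K}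

/-- A filtered family of sets: nonempty, and every two members contain a common member. -/
def FiltFam [TopologicalSpace X] (𝒦 : Set (Set X)) : Prop :=
  𝒦.Nonempty ∧ ∀ K₁ ∈ 𝒦, ∀ K₂ ∈ 𝒦, ∃ K₃ ∈ 𝒦, K₃ ⊆ K₁ ∧ K₃ ⊆ K₂

/-- Well-filtered space. -/
def IsWF (X : Type u) [TopologicalSpace X] : Prop :=
  T0Space X ∧ ∀ 𝒦 : Set (Set X), 𝒦 ⊆ KSet X → FiltFam 𝒦 →
    ∀ U : Set X, IsOpen U → ⋂₀ 𝒦 ⊆ U → ∃ K ∈ 𝒦, K ⊆ U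

/-- Sober space: every irreducible closed subset is the closure of a unique point. -/
def IsSober (X : Type u) [TopologicalSpace X] : Prop :=
  ∀ A : Set X, IsIrreducible A → IsClosed A → ∃! x : X, A = closure {x}

/-- `V` is way below `U` in the lattice of open sets: every open cover of `U`
has a finite subfamily covering `V`. -/
def wayBelow [TopologicalSpace X] (V U : Set X) : Prop :=
  ∀ 𝒞 : Set (Set X), (∀ W ∈ 𝒞, IsOpen W) → U ⊆ ⋃₀ 𝒞 →
    ∃ 𝒟 ⊆ 𝒞, 𝒟.Finite ∧ V ⊆ ⋃₀ 𝒟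

/-- Core compact space. -/
def CoreCompact (X : Type u) [TopologicalSpace X] : Prop :=
  ∀ (x : X) (U : Set X), IsOpen U → x ∈ U →
    ∃ V : Set X, IsOpen V ∧ x ∈ V ∧ wayBelow V U

/-- The underlying type of the Smyth power space: nonempty compact saturated subsets. -/
abbrev KS (X : Type u) [TopologicalSpace X] : Type u :=
  {K : Set X // K.Nonempty ∧ IsCompact K ∧ IsSat K}

/-- The upper Vietoris topology on `KS X`, generated by the sets
`□U = {K | K ⊆ U}` for `U` open; this makes `KS X` the Smyth power space `P_S(X)`. -/
instance (X : Type u) [TopologicalSpace X] : TopologicalSpace (KS X) :=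
  TopologicalSpace.generateFrom
    {S | ∃ U : Set X, IsOpen U ∧ S = {K : KS X | (K : Set X) ⊆ U}}

/-- Rudin set: a nonempty closed set that is a minimal closed set meeting all
members of some filtered family of nonempty compact saturated sets. -/
def RudinSet [TopologicalSpace X] (A : Set X) : Prop :=
  IsClosed A ∧ A.Nonempty ∧ ∃ 𝒦 : Set (Set X), 𝒦 ⊆ KSet X ∧ FiltFam 𝒦 ∧
    (∀ K ∈ 𝒦, (K ∩ A).Nonempty) ∧
    ∀ B : Set X, IsClosed B → B ⊆ A → (∀ K ∈ 𝒦, (K ∩ B).Nonempty) → B = A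

/-- Well-filtered determined (WD) set. -/
def IsWDSet [TopologicalSpace X] (A : Set X) : Prop :=
  IsClosed A ∧ A.Nonempty ∧ ∀ (Y : Type u) [TopologicalSpace Y], IsWF Y →
    ∀ f : X → Y, Continuous f → ∃ y : Y, closure (f '' A) = closure {y}

/-- Rudin space: every irreducible closed set is a Rudin set. -/
def RudinSpace (X : Type u) [TopologicalSpace X] : Prop :=
  ∀ A : Set X, IsClosed A → IsIrreducible A → RudinSet A

/-- WD space: every irreducible closed set is a WD set. -/
def WDSpace (X : Type u) [TopologicalSpace X] : Prop :=
  ∀ A : Set X, IsClosed A → IsIrreducible A → IsWDSet A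

/-- DC space: every irreducible closed set is the closure of a directed set. -/
def DCSpace (X : Type u) [TopologicalSpace X] : Prop :=
  ∀ A : Set X, IsClosed A → IsIrreducible A → ∃ D : Set X, dirOn D ∧ A = closure D

-- ====== auxiliary development ======

section SpecAux
variable {Y : Type u} [TopologicalSpace Y]

theorem specLE_refl' (x : Y) : specLE x x := subset_closure rfl

theorem specLE_trans' {x y z : Y} (h1 : specLE x y) (h2 : specLE y z) : specLE x z :=
  closure_minimal (singleton_subset_iff.2 h2) isClosed_closure h1

theorem specLE_iff_open' {x y : Y} :
    specLE x y ↔ ∀ U : Set Y, IsOpen U → x ∈ U → y ∈ U := by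
  constructor
  · intro h U hU hx
    rcases mem_closure_iff.1 h U hU hx with ⟨z, hz1, hz2⟩
    exact (show z = y from hz2) ▸ hz1
  · intro h
    rw [specLE, mem_closure_iff]
    exact fun U hU hx => ⟨y, h U hU hx, rfl⟩

/-- upper set predicate -/
def UpperS (A : Set Y) : Prop := ∀ a ∈ A, ∀ b, specLE a b → b ∈ A

theorem isSat_iff_upper {A : Set Y} : IsSat A ↔ UpperS A := by
  constructor
  · intro hs a ha b hab
    have hb : b ∈ ⋂₀ {U : Set Y | IsOpen U ∧ A ⊆ U} := by
      rw [mem_sInter]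
      rintro U ⟨hU, hAU⟩
      exact specLE_iff_open'.1 hab U hU (hAU ha)
    exact hs.symm ▸ hb
  · intro hu
    apply Subset.antisymm
    · intro x hx
      rw [mem_sInter]
      rintro U ⟨_, hAU⟩
      exact hAU hx
    · intro z hz
      by_contra hzA
      have hU : IsOpen (closure ({z} : Set Y))ᶜ := isClosed_closure.isOpen_compl
      have hAU : A ⊆ (closure ({z} : Set Y))ᶜ := fun a ha hacl => hzA (hu a ha z hacl)
      exact (mem_sInter.1 hz _ ⟨hU, hAU⟩) (subset_closure rfl)

end SpecAux

section Smyth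
variable [TopologicalSpace X]

def boxS (U : Set X) : Set (KS X) := {K : KS X | (K : Set X) ⊆ U}

theorem isOpen_boxS {U : Set X} (hU : IsOpen U) : IsOpen (boxS U) :=
  TopologicalSpace.isOpen_generateFrom_of_mem ⟨U, hU, rfl⟩

theorem exists_box_subset {𝒱 : Set (KS X)} (h : IsOpen 𝒱) :
    ∀ K : KS X, K ∈ 𝒱 → ∃ U : Set X, IsOpen U ∧ (K : Set X) ⊆ U ∧ boxS U ⊆ 𝒱 := by
  have h' : TopologicalSpace.GenerateOpen
      {S | ∃ U : Set X, IsOpen U ∧ S = {K : KS X | (K : Set X) ⊆ U}} 𝒱 := h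
  clear h
  induction h' with
  | basic S hS =>
    rcases hS with ⟨U, hU, rfl⟩
    exact fun K hK => ⟨U, hU, hK, fun L hL => hL⟩
  | univ => exact fun K _ => ⟨univ, isOpen_univ, subset_univ _, subset_univ _⟩
  | inter s t _ _ ihs iht =>
    intro K hK
    rcases ihs K hK.1 with ⟨U, hU, hKU, hbU⟩
    rcases iht K hK.2 with ⟨V, hV, hKV, hbV⟩
    exact ⟨U ∩ V, hU.inter hV, subset_inter hKU hKV,
      fun L hL => ⟨hbU fun x hx => (hL hx).1, hbV fun x hx => (hL hx).2⟩⟩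
  | sUnion S _ ih =>
    intro K hK
    rcases hK with ⟨s, hs, hKs⟩
    rcases ih s hs K hKs with ⟨U, hU, h1, h2⟩
    exact ⟨U, hU, h1, fun L hL => ⟨s, hs, h2 hL⟩⟩

theorem specLE_KS {K L : KS X} : specLE K L ↔ (L : Set X) ⊆ (K : Set X) := by
  constructor
  · intro h
    intro x hx
    have hmem : x ∈ ⋂₀ {U : Set X | IsOpen U ∧ (K : Set X) ⊆ U} := by
      rw [mem_sInter]
      rintro U ⟨hU, hKU⟩
      exact specLE_iff_open'.1 h (boxS U) (isOpen_boxS hU) hKU hx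
    exact K.2.2.2.symm ▸ hmem
  · intro h
    rw [specLE, mem_closure_iff]
    intro O hO hKO
    rcases exists_box_subset hO K hKO with ⟨U, hU, hKU, hbox⟩
    exact ⟨L, hbox (h.trans hKU), rfl⟩

theorem t0_KS : T0Space (KS X) := by
  rw [t0Space_iff_inseparable]
  intro K L h
  rcases inseparable_iff_mem_closure.1 h with ⟨h1, h2⟩
  exact Subtype.ext (Subset.antisymm (specLE_KS.1 h2) (specLE_KS.1 h1))

end Smyth

section WFFacts
variable {Y : Type u} [TopologicalSpace Y]

theorem WF_sInter_mem (hwf : IsWF Y) {𝒦 : Set (Set Y)} (h𝒦 : 𝒦 ⊆ KSet Y)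
    (hf : FiltFam 𝒦) : ⋂₀ 𝒦 ∈ KSet Y := by
  refine ⟨?_, ?_, ?_⟩
  · by_contra hne
    rw [not_nonempty_iff_eq_empty] at hne
    rcases hwf.2 𝒦 h𝒦 hf ∅ isOpen_empty (by rw [hne]) with ⟨K, hK, hKsub⟩
    rcases (h𝒦 hK).1 with ⟨x, hx⟩
    exact hKsub hx
  · apply isCompact_of_finite_subcover
    intro ι U hU hcov
    rcases hwf.2 𝒦 h𝒦 hf (⋃ i, U i) (isOpen_iUnion hU) hcov with ⟨K, hK, hKU⟩
    rcases (h𝒦 hK).2.1.elim_finite_subcover U hU hKU with ⟨t, ht⟩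
    exact ⟨t, Subset.trans (sInter_subset_of_mem hK) ht⟩
  · apply isSat_iff_upper.2
    intro a ha b hab
    rw [mem_sInter] at ha ⊢
    intro K hK
    exact isSat_iff_upper.1 (h𝒦 hK).2.2 a (ha K hK) b hab

def upS (x : Y) : Set Y := {y | specLE x y}

theorem upS_mem_KSet (x : Y) : upS x ∈ KSet Y := by
  refine ⟨⟨x, specLE_refl' x⟩, ?_, ?_⟩
  · apply isCompact_of_finite_subcover
    intro ι U hU hcov
    rcases mem_iUnion.1 (hcov (specLE_refl' x)) with ⟨i, hi⟩
    refine ⟨{i}, fun y hy => ?_⟩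
    have : y ∈ U i := specLE_iff_open'.1 hy (U i) (hU i) hi
    simpa using this
  · exact isSat_iff_upper.2 fun a ha b hab => specLE_trans' ha hab

theorem upFam {D : Set Y} (hD : dirOn D) :
    (upS '' D) ⊆ KSet Y ∧ FiltFam (upS '' D) := by
  refine ⟨by rintro _ ⟨d, _, rfl⟩; exact upS_mem_KSet d, hD.1.image _, ?_⟩
  rintro _ ⟨a, ha, rfl⟩ _ ⟨b, hb, rfl⟩
  rcases hD.2 a ha b hb with ⟨c, hc, h1, h2⟩
  exact ⟨upS c, ⟨c, hc, rfl⟩, fun y hy => specLE_trans' h1 hy,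
    fun y hy => specLE_trans' h2 hy⟩

theorem isWF_dSpace (hwf : IsWF Y) : IsDSpace Y := by
  obtain ⟨ht0, hw⟩ := hwf
  refine ⟨ht0, ?_, ?_⟩
  · intro D hD
    obtain ⟨h𝒦, hff⟩ := upFam hD
    have key : (closure D ∩ ⋂₀ (upS '' D)).Nonempty := by
      by_contra h
      rw [not_nonempty_iff_eq_empty] at h
      have hsub : ⋂₀ (upS '' D) ⊆ (closure D)ᶜ := by
        intro z hz hzc
        exact absurd (Set.mem_inter hzc hz) (by rw [h]; exact notMem_empty z)
      rcases hw _ h𝒦 hff _ isClosed_closure.isOpen_compl hsub with ⟨K, ⟨d, hd, rfl⟩, hKsub⟩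
      exact (hKsub (specLE_refl' d)) (subset_closure hd)
    obtain ⟨x, hxc, hxi⟩ := key
    refine ⟨x, fun d hd => mem_sInter.1 hxi _ ⟨d, hd, rfl⟩, ?_⟩
    intro y hy
    have : closure D ⊆ closure ({y} : Set Y) :=
      closure_minimal (fun d hd => hy d hd) isClosed_closure
    exact this hxc
  · intro D hD x hsup U hU hxU
    obtain ⟨h𝒦, hff⟩ := upFam hD
    have hsub : ⋂₀ (upS '' D) ⊆ U := by
      intro z hz
      have hub : ∀ d ∈ D, specLE d z := fun d hd => mem_sInter.1 hz _ ⟨d, hd, rfl⟩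
      exact specLE_iff_open'.1 (hsup.2 z hub) U hU hxU
    rcases hw _ h𝒦 hff U hU hsub with ⟨K, ⟨d, hd, rfl⟩, hKU⟩
    exact ⟨d, hd, hKU (specLE_refl' d)⟩

end WFFacts

section Rudin
variable {Y : Type u} [TopologicalSpace Y]

theorem chain_min {α : Type u} {c : Set (Set α)} (hc : IsChain (· ⊆ ·) c) :
    ∀ t : Finset (Set α), ↑t ⊆ c → t.Nonempty → ∃ B ∈ t, ∀ B' ∈ t, B ⊆ B' := by
  classical
  intro t
  induction t using Finset.induction_on with
  | empty => intro _ h; simp at h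
  | @insert a s ha ih =>
    intro hsub _
    by_cases hs : s.Nonempty
    · rcases ih (fun x hx => hsub (by simp [hx])) hs with ⟨B, hB, hmin⟩
      have hBc : B ∈ c := hsub (by simp [hB])
      have hac : a ∈ c := hsub (by simp)
      rcases eq_or_ne B a with rfl | hne
      · refine ⟨B, by simp, fun B' hB' => ?_⟩
        rcases Finset.mem_insert.1 hB' with rfl | h
        · exact Subset.rfl
        · exact hmin B' h
      · rcases hc hBc hac hne with h1 | h1
        · refine ⟨B, by simp [hB], fun B' hB' => ?_⟩
          rcases Finset.mem_insert.1 hB' with rfl | h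
          · exact h1
          · exact hmin B' h
        · refine ⟨a, by simp, fun B' hB' => ?_⟩
          rcases Finset.mem_insert.1 hB' with rfl | h
          · exact Subset.rfl
          · exact h1.trans (hmin B' h)
    · rw [Finset.not_nonempty_iff_eq_empty] at hs
      subst hs
      refine ⟨a, by simp, fun B' hB' => ?_⟩
      rcases Finset.mem_insert.1 hB' with rfl | h
      · exact Subset.rfl
      · simp at h

theorem rudin {ℱ : Set (Set Y)} (hcomp : ∀ Q ∈ ℱ, IsCompact Q) {C : Set Y}
    (hC : IsClosed C) (hmeet : ∀ Q ∈ ℱ, (Q ∩ C).Nonempty) :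
    ∃ A, A ⊆ C ∧ IsClosed A ∧ (∀ Q ∈ ℱ, (Q ∩ A).Nonempty) ∧
      ∀ B, IsClosed B → B ⊆ A → (∀ Q ∈ ℱ, (Q ∩ B).Nonempty) → B = A := by
  classical
  set S : Set (Set Y) := {B | B ⊆ C ∧ IsClosed B ∧ ∀ Q ∈ ℱ, (Q ∩ B).Nonempty} with hS
  have hz : ∀ c ⊆ S, IsChain (· ⊆ ·) c → c.Nonempty → ∃ lb ∈ S, ∀ s ∈ c, lb ⊆ s := by
    intro c hcS hchain hcne
    refine ⟨⋂₀ c, ⟨?_, ?_, ?_⟩, fun s hs => sInter_subset_of_mem hs⟩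
    · rcases hcne with ⟨s, hs⟩; exact (sInter_subset_of_mem hs).trans (hcS hs).1
    · exact isClosed_sInter (fun s hs => (hcS hs).2.1)
    · intro Q hQ
      by_contra hemp
      rw [not_nonempty_iff_eq_empty, sInter_eq_iInter] at hemp
      rcases (hcomp Q hQ).elim_finite_subfamily_closed (fun s : c => (s : Set Y))
        (fun s => (hcS s.2).2.1) hemp with ⟨t, ht⟩
      by_cases htne : t.Nonempty
      · rcases chain_min hchain (t.image Subtype.val)
          (by intro x hx; rcases Finset.mem_image.1 hx with ⟨s, _, rfl⟩; exact s.2)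
          (htne.image _) with ⟨B, hBt, hBmin⟩
        rcases Finset.mem_image.1 hBt with ⟨s₀, hs₀t, rfl⟩
        rcases (hcS s₀.2).2.2 Q hQ with ⟨y, hyQ, hys⟩
        have : y ∈ Q ∩ ⋂ i ∈ t, (i : Set Y) := by
          refine ⟨hyQ, ?_⟩
          rw [mem_iInter₂]
          intro i hit
          exact hBmin (i : Set Y) (Finset.mem_image_of_mem _ hit) hys
        rw [ht] at this
        exact this
      · rw [Finset.not_nonempty_iff_eq_empty] at htne
        subst htne
        simp only [Finset.notMem_empty, iInter_of_empty, iInter_univ, inter_univ] at ht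
        rcases hmeet Q hQ with ⟨y, hyQ, _⟩
        rw [ht] at hyQ
        exact hyQ
  rcases zorn_superset_nonempty S hz C ⟨Subset.rfl, hC, hmeet⟩ with ⟨m, hmC, hmin⟩
  refine ⟨m, hmin.1.1, hmin.1.2.1, hmin.1.2.2, ?_⟩
  intro B hBcl hBm hBmeet
  have hBS : B ∈ S := ⟨hBm.trans hmin.1.1, hBcl, hBmeet⟩
  exact Subset.antisymm hBm (hmin.2 hBS hBm)

end Rudin

section Main
variable [TopologicalSpace X]

theorem union_compact {𝒬 : Set (KS X)} (h : IsCompact 𝒬) :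
    IsCompact (⋃ A ∈ 𝒬, (A : Set X)) := by
  classical
  apply isCompact_of_finite_subcover
  intro ι U hU hcov
  have hfin : ∀ A : KS X, A ∈ 𝒬 → ∃ t : Finset ι, (A : Set X) ⊆ ⋃ i ∈ t, U i := by
    intro A hAQ
    exact A.2.2.1.elim_finite_subcover U hU (fun x hx => hcov (mem_biUnion hAQ hx))
  have hcov2 : 𝒬 ⊆ ⋃ t : Finset ι, boxS (⋃ i ∈ t, U i) := by
    intro A hAQ
    rcases hfin A hAQ with ⟨t, ht⟩
    exact mem_iUnion.2 ⟨t, ht⟩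
  rcases h.elim_finite_subcover (fun t : Finset ι => boxS (⋃ i ∈ t, U i))
    (fun t => isOpen_boxS (isOpen_biUnion fun i _ => hU i)) hcov2 with ⟨T, hT⟩
  refine ⟨T.biUnion id, ?_⟩
  intro x hx
  rcases mem_iUnion₂.1 hx with ⟨A, hAQ, hxA⟩
  rcases mem_iUnion₂.1 (hT hAQ) with ⟨t, htT, hAt⟩
  rcases mem_iUnion₂.1 (hAt hxA) with ⟨i, hit, hxi⟩
  exact mem_iUnion₂.2 ⟨i, Finset.mem_biUnion.2 ⟨t, htT, hit⟩, hxi⟩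

theorem wf_to_dspace_KS (hwf : IsWF X) : IsDSpace (KS X) := by
  have valfam : ∀ D : Set (KS X), dirOn D →
      (Subtype.val '' D : Set (Set X)) ⊆ KSet X ∧ FiltFam (Subtype.val '' D) := by
    intro D hD
    refine ⟨by rintro _ ⟨K, _, rfl⟩; exact K.2, hD.1.image _, ?_⟩
    rintro _ ⟨a, ha, rfl⟩ _ ⟨b, hb, rfl⟩
    rcases hD.2 a ha b hb with ⟨c, hc, h1, h2⟩
    exact ⟨c.1, ⟨c, hc, rfl⟩, specLE_KS.1 h1, specLE_KS.1 h2⟩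
  refine ⟨t0_KS, ?_, ?_⟩
  · intro D hD
    obtain ⟨h𝒦, hff⟩ := valfam D hD
    have hQ : ⋂₀ (Subtype.val '' D) ∈ KSet X := WF_sInter_mem hwf h𝒦 hff
    refine ⟨⟨_, hQ⟩, fun K hK => specLE_KS.2 (sInter_subset_of_mem ⟨K, hK, rfl⟩), ?_⟩
    intro L hL
    exact specLE_KS.2 (subset_sInter (by rintro _ ⟨d, hd, rfl⟩; exact specLE_KS.1 (hL d hd)))
  · intro D hD x hsup 𝒰 h𝒰 hx𝒰
    obtain ⟨h𝒦, hff⟩ := valfam D hD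
    have hQ : ⋂₀ (Subtype.val '' D) ∈ KSet X := WF_sInter_mem hwf h𝒦 hff
    have hub : ∀ d ∈ D, specLE d (⟨_, hQ⟩ : KS X) :=
      fun d hd => specLE_KS.2 (sInter_subset_of_mem ⟨d, hd, rfl⟩)
    have hle : ⋂₀ (Subtype.val '' D) ⊆ (x : Set X) := specLE_KS.1 (hsup.2 _ hub)
    rcases exists_box_subset h𝒰 x hx𝒰 with ⟨U, hU, hxU, hbox⟩
    rcases hwf.2 _ h𝒦 hff U hU (hle.trans hxU) with ⟨_, ⟨k, hk, rfl⟩, hKU⟩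
    exact ⟨k, hk, hbox hKU⟩

theorem dspaceKS_to_wf [T0Space X] (hd : IsDSpace (KS X)) : IsWF X := by
  refine ⟨inferInstance, ?_⟩
  intro 𝒦 h𝒦 hff U hU hsub
  set D : Set (KS X) := {K : KS X | K.1 ∈ 𝒦} with hD
  have hDdir : dirOn D := by
    constructor
    · rcases hff.1 with ⟨K, hK⟩; exact ⟨⟨K, h𝒦 hK⟩, hK⟩
    · intro a ha b hb
      rcases hff.2 a.1 ha b.1 hb with ⟨c, hc, h1, h2⟩
      exact ⟨⟨c, h𝒦 hc⟩, hc, specLE_KS.2 h1, specLE_KS.2 h2⟩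
  rcases hd.2.1 D hDdir with ⟨q, hq⟩
  have hqsub : (q : Set X) ⊆ U := by
    refine (subset_sInter (fun S hS => ?_)).trans hsub
    exact specLE_KS.1 (hq.1 ⟨S, h𝒦 hS⟩ hS)
  rcases hd.2.2 D hDdir q hq (boxS U) (isOpen_boxS hU) hqsub with ⟨K, hKD, hKU⟩
  exact ⟨K.1, hKD, hKU⟩

theorem wf_to_wf_KS (hwf : IsWF X) : IsWF (KS X) := by
  refine ⟨t0_KS, ?_⟩
  intro ℱ hℱ hff 𝒰 h𝒰 hsub
  by_contra hcon
  push_neg at hcon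
  have hmeet : ∀ Q ∈ ℱ, (Q ∩ 𝒰ᶜ).Nonempty := by
    intro Q hQ
    rcases not_subset.1 (hcon Q hQ) with ⟨A, hAQ, hA𝒰⟩
    exact ⟨A, hAQ, hA𝒰⟩
  rcases rudin (fun Q hQ => (hℱ hQ).2.1) h𝒰.isClosed_compl hmeet with
    ⟨𝒜, h𝒜C, h𝒜cl, h𝒜meet, h𝒜min⟩
  set m : Set (KS X) → Set X := fun Q => ⋃ A ∈ Q ∩ 𝒜, (A : Set X) with hm
  set 𝒟 : Set (Set X) := m '' ℱ with h𝒟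
  have hmmem : ∀ Q ∈ ℱ, m Q ∈ KSet X := by
    intro Q hQ
    refine ⟨?_, ?_, ?_⟩
    · rcases h𝒜meet Q hQ with ⟨A, hA⟩
      rcases A.2.1 with ⟨x, hx⟩
      exact ⟨x, mem_biUnion hA hx⟩
    · exact union_compact ((hℱ hQ).2.1.inter_right h𝒜cl)
    · apply isSat_iff_upper.2
      intro a ha b hab
      rcases mem_iUnion₂.1 ha with ⟨A, hA, haA⟩
      exact mem_iUnion₂.2 ⟨A, hA, isSat_iff_upper.1 A.2.2.2 a haA b hab⟩
  have h𝒟K : 𝒟 ⊆ KSet X := by rintro _ ⟨Q, hQ, rfl⟩; exact hmmem Q hQ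
  have hmono : ∀ Q1 Q3 : Set (KS X), Q3 ⊆ Q1 → m Q3 ⊆ m Q1 := by
    intro Q1 Q3 h31 x hx
    rcases mem_iUnion₂.1 hx with ⟨A, hA, hxA⟩
    exact mem_iUnion₂.2 ⟨A, ⟨h31 hA.1, hA.2⟩, hxA⟩
  have h𝒟f : FiltFam 𝒟 := by
    constructor
    · rcases hff.1 with ⟨Q, hQ⟩; exact ⟨m Q, ⟨Q, hQ, rfl⟩⟩
    · rintro _ ⟨Q1, hQ1, rfl⟩ _ ⟨Q2, hQ2, rfl⟩
      rcases hff.2 Q1 hQ1 Q2 hQ2 with ⟨Q3, hQ3, h31, h32⟩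
      exact ⟨m Q3, ⟨Q3, hQ3, rfl⟩, hmono _ _ h31, hmono _ _ h32⟩
  have hR : ⋂₀ 𝒟 ∈ KSet X := WF_sInter_mem hwf h𝒟K h𝒟f
  have claimA : ∀ A : KS X, A ∈ 𝒜 → ⋂₀ 𝒟 ⊆ (A : Set X) := by
    intro A hA x hx
    have hx' : x ∈ ⋂₀ {U : Set X | IsOpen U ∧ (A : Set X) ⊆ U} := by
      rw [mem_sInter]
      rintro U ⟨hU, hAU⟩
      have hprop : ¬ (∀ Q ∈ ℱ, (Q ∩ (𝒜 ∩ (boxS U)ᶜ)).Nonempty) := by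
        intro hall
        have heq := h𝒜min (𝒜 ∩ (boxS U)ᶜ)
          (h𝒜cl.inter (isOpen_boxS hU).isClosed_compl) inter_subset_left hall
        have : A ∈ 𝒜 ∩ (boxS U)ᶜ := heq.symm ▸ hA
        exact this.2 hAU
      push_neg at hprop
      rcases hprop with ⟨Q0, hQ0, hQ0emp⟩
      have hmQ0 : m Q0 ⊆ U := by
        intro y hy
        rcases mem_iUnion₂.1 hy with ⟨B, hB, hyB⟩
        have hBbox : B ∈ boxS U := by
          by_contra hnb
          have : B ∈ Q0 ∩ (𝒜 ∩ (boxS U)ᶜ) := ⟨hB.1, hB.2, hnb⟩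
          rw [hQ0emp] at this
          exact this
        exact hBbox hyB
      have hmem𝒟 : m Q0 ∈ 𝒟 := ⟨Q0, hQ0, rfl⟩
      exact ((sInter_subset_of_mem hmem𝒟).trans hmQ0) hx
    exact A.2.2.2.symm ▸ hx'
  set r : KS X := ⟨⋂₀ 𝒟, hR⟩ with hr
  have hrQ : ∀ Q ∈ ℱ, r ∈ Q := by
    intro Q hQ
    rcases h𝒜meet Q hQ with ⟨A, hAQ, hA𝒜⟩
    exact isSat_iff_upper.1 (hℱ hQ).2.2 A hAQ r (specLE_KS.2 (claimA A hA𝒜))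
  have hr𝒜 : r ∈ 𝒜 := by
    rw [← h𝒜cl.closure_eq]
    rw [mem_closure_iff]
    intro 𝒱 h𝒱 hr𝒱
    rcases exists_box_subset h𝒱 r hr𝒱 with ⟨U, hU, hrU, hbox⟩
    rcases hwf.2 𝒟 h𝒟K h𝒟f U hU hrU with ⟨_, ⟨Q, hQ, rfl⟩, hmU⟩
    rcases h𝒜meet Q hQ with ⟨A, hAQ, hA𝒜⟩
    have hAbox : A ∈ boxS U := fun x hx => hmU (mem_biUnion ⟨hAQ, hA𝒜⟩ hx)
    exact ⟨A, hbox hAbox, hA𝒜⟩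
  exact (h𝒜C hr𝒜) (hsub (mem_sInter.2 hrQ))

end Main

/-- for a T0 space `X`, `X` is well-filtered iff its Smyth power space is
a d-space iff its Smyth power space is well-filtered. -/
theorem stmt16 {X : Type u} [TopologicalSpace X] [T0Space X] :
    List.TFAE [IsWF X, IsDSpace (KS X), IsWF (KS X)] := by
  tfae_have 1 → 2 := wf_to_dspace_KS
  tfae_have 2 → 1 := dspaceKS_to_wf
  tfae_have 1 → 3 := wf_to_wf_KS
  tfae_have 3 → 2 := fun h => isWF_dSpace h
  tfae_finish
end

section
/- For a T0 space X, the following are equivalent: (1) X is second-countable; (2) the Smyth power space P_S(X) is second-countable. -/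
open Set Topology

universe u

variable {X : Type u}

section SmythAux

variable [TopologicalSpace X]

/-- The generating family for the upper Vietoris topology. -/
private def boxGen (X : Type u) [TopologicalSpace X] : Set (Set (KS X)) :=
  {S | ∃ U : Set X, IsOpen U ∧ S = {K : KS X | (K : Set X) ⊆ U}}

private lemma ks_topology_eq :
    instTopologicalSpaceKS X = TopologicalSpace.generateFrom (boxGen X) := rfl

/-- Saturation of a point. -/
private def etaSet (x : X) : Set X := {y | x ∈ closure ({y} : Set X)}

private lemma self_mem_etaSet (x : X) : x ∈ etaSet x := subset_closure rfl

private lemma etaSet_subset_iff {x : X} {U : Set X} (hU : IsOpen U) :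
    etaSet x ⊆ U ↔ x ∈ U := by
  constructor
  · intro h; exact h (self_mem_etaSet x)
  · intro hx y hy
    by_contra hyU
    have h1 : closure ({y} : Set X) ⊆ Uᶜ :=
      closure_minimal (Set.singleton_subset_iff.mpr hyU) hU.isClosed_compl
    exact h1 hy hx

private lemma etaSet_compact (x : X) : IsCompact (etaSet x) := by
  apply isCompact_of_finite_subcover
  intro ι U hU hcov
  obtain ⟨i, hi⟩ := Set.mem_iUnion.mp (hcov (self_mem_etaSet x))
  refine ⟨{i}, ?_⟩
  have : etaSet x ⊆ U i := (etaSet_subset_iff (hU i)).mpr hi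
  simpa using this

private lemma etaSet_sat (x : X) : IsSat (etaSet x) := by
  apply Set.Subset.antisymm
  · intro y hy
    exact fun U hU => hU.2 hy
  · intro y hy
    by_contra hxy
    have hopen : IsOpen (closure ({y} : Set X))ᶜ := isClosed_closure.isOpen_compl
    have hsub : etaSet x ⊆ (closure ({y} : Set X))ᶜ := by
      intro z hz hzc
      exact hxy (closure_minimal (Set.singleton_subset_iff.mpr hzc) isClosed_closure hz)
    have := hy _ ⟨hopen, hsub⟩
    exact this (subset_closure rfl)

private def etaK (x : X) : KS X :=
  ⟨etaSet x, ⟨x, self_mem_etaSet x⟩, etaSet_compact x, etaSet_sat x⟩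

private lemma exists_box {S : Set (KS X)} (hS : IsOpen S) :
    ∀ K ∈ S, ∃ U : Set X, IsOpen U ∧ (K : Set X) ⊆ U ∧
      {L : KS X | (L : Set X) ⊆ U} ⊆ S := by
  have hS' : TopologicalSpace.GenerateOpen (boxGen X) S := hS
  induction hS' with
  | basic S hSb =>
    obtain ⟨U, hU, rfl⟩ := hSb
    exact fun K hK => ⟨U, hU, hK, fun _ hL => hL⟩
  | univ => exact fun K _ => ⟨Set.univ, isOpen_univ, Set.subset_univ _, fun _ _ => trivial⟩
  | inter S T hSg hTg ihS ihT =>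
    intro K hK
    obtain ⟨U, hU, hKU, hUS⟩ := ihS hSg K hK.1
    obtain ⟨V, hV, hKV, hVT⟩ := ihT hTg K hK.2
    exact ⟨U ∩ V, hU.inter hV, Set.subset_inter hKU hKV,
      fun L hL => ⟨hUS fun y hy => (hL hy).1, hVT fun y hy => (hL hy).2⟩⟩
  | sUnion 𝒮 hmem ih =>
    intro K hK
    obtain ⟨S, hSmem, hKS⟩ := hK
    obtain ⟨U, hU, hKU, hUS⟩ := ih S hSmem (hmem S hSmem) K hKS
    exact ⟨U, hU, hKU, fun L hL => ⟨S, hSmem, hUS hL⟩⟩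

private lemma ks_second_countable [SecondCountableTopology X] :
    SecondCountableTopology (KS X) := by
  obtain ⟨b, hbc, -, hbb⟩ := TopologicalSpace.exists_countable_basis X
  refine TopologicalSpace.IsTopologicalBasis.secondCountableTopology
    (b := (fun F => {K : KS X | (K : Set X) ⊆ ⋃₀ F}) '' {F | F.Finite ∧ F ⊆ b}) ?_ ?_
  · apply TopologicalSpace.isTopologicalBasis_of_isOpen_of_nhds
    · rintro S ⟨F, ⟨hF, hFb⟩, rfl⟩
      exact TopologicalSpace.isOpen_generateFrom_of_mem
        ⟨⋃₀ F, isOpen_sUnion fun W hW => (hbb.isOpen (hFb hW)), rfl⟩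
    · intro K S hK hS
      obtain ⟨U, hU, hKU, hUS⟩ := exists_box hS K hK
      -- cover K by basis elements contained in U
      have hcov : (K : Set X) ⊆ ⋃ V : {V : Set X // V ∈ b ∧ V ⊆ U}, (V : Set X) := by
        intro x hx
        obtain ⟨V, hVb, hxV, hVU⟩ := hbb.exists_subset_of_mem_open (hKU hx) hU
        exact Set.mem_iUnion.mpr ⟨⟨V, hVb, hVU⟩, hxV⟩
      obtain ⟨t, ht⟩ := K.2.2.1.elim_finite_subcover
        (fun V : {V : Set X // V ∈ b ∧ V ⊆ U} => (V : Set X))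
        (fun V => hbb.isOpen V.2.1) hcov
      refine ⟨{K : KS X | (K : Set X) ⊆ ⋃₀ (Subtype.val '' (t : Set {V : Set X // V ∈ b ∧ V ⊆ U}))},
        ⟨_, ⟨(t.finite_toSet.image _), ?_⟩, rfl⟩, ?_, ?_⟩
      · rintro V ⟨W, _, rfl⟩; exact W.2.1
      · intro x hx
        obtain ⟨V, hVt, hxV⟩ := Set.mem_iUnion₂.mp (ht hx)
        exact ⟨V, ⟨V, hVt, rfl⟩, hxV⟩
      · intro L hL
        apply hUS
        intro y hy
        obtain ⟨W, ⟨V, _, rfl⟩, hyW⟩ := hL hy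
        exact V.2.2 hyW
  · exact (Set.countable_setOf_finite_subset hbc).image _

private lemma eta_inducing : Topology.IsInducing (etaK : X → KS X) := by
  constructor
  rw [ks_topology_eq (X := X), induced_generateFrom_eq]
  have himg : Set.preimage (etaK : X → KS X) '' boxGen X = {U : Set X | IsOpen U} := by
    ext V
    constructor
    · rintro ⟨S, ⟨U, hU, rfl⟩, rfl⟩
      have : (etaK : X → KS X) ⁻¹' {K : KS X | (K : Set X) ⊆ U} = U := by
        ext x; exact etaSet_subset_iff hU
      rw [this]; exact hU
    · intro hV
      exact ⟨{K : KS X | (K : Set X) ⊆ V}, ⟨V, hV, rfl⟩, by ext x; exact etaSet_subset_iff hV⟩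
  rw [himg]
  exact (TopologicalSpace.generateFrom_setOf_isOpen _).symm

end SmythAux

/-- a T0 space is second-countable iff its Smyth power space is. -/
theorem stmt17 {X : Type u} [TopologicalSpace X] [T0Space X] :
    SecondCountableTopology X ↔ SecondCountableTopology (KS X) := by
  constructor
  · intro h
    exact ks_second_countable
  · intro h
    exact (eta_inducing (X := X)).secondCountableTopology
end

section
/- Let X be a first-countable T0 space such that for every nonempty compact saturated subset K of X, the set min(K) of minimal elements of K (with respect to the specialization order) is countable. Then the Smyth power space P_S(X) is first-countable. -/
open Set Topology

universe u

variable {X : Type u}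

/-!
Every point of a compact set `K` lies above a minimal point of `K`: a closed point of the
closure of that point in the compact T0 subspace `K`. Since open sets are upper sets, an open
set contains `K` as soon as it contains `min K`. So if `min K` is countable and each of its
points has a countable base of open neighbourhoods, compactness shows that the sets `□V`, with
`V` a finite union of such basic open sets covering `K`, form a countable neighbourhood base
of `K` in the upper Vietoris topology.
-/

section Specialization

variable [TopologicalSpace X]

def specMin (K : Set X) : Set X := {x ∈ K | ∀ y ∈ K, specLE y x → y = x}

theorem specLE_iff_specializes {x y : X} : specLE x y ↔ y ⤳ x :=
  specializes_iff_mem_closure.symm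

theorem IsOpen.mem_of_specLE {U : Set X} (hU : IsOpen U) {x y : X} (hxy : specLE x y)
    (hx : x ∈ U) : y ∈ U :=
  (specLE_iff_specializes.1 hxy).mem_open hU hx

theorem IsCompact.exists_mem_specMin_specLE [T0Space X] {K : Set X} (hK : IsCompact K)
    {p : X} (hp : p ∈ K) : ∃ m ∈ specMin K, specLE m p := by
  have : CompactSpace K := isCompact_iff_compactSpace.1 hK
  obtain ⟨m, hmp, hm_closed⟩ :=
    isClosed_closure.exists_closed_singleton (singleton_nonempty (⟨p, hp⟩ : K)).closure
  refine ⟨m, ⟨m.2, fun y hy hym => ?_⟩, ?_⟩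
  · have : (⟨y, hy⟩ : K) ∈ closure {m} := by
      rw [closure_subtype, image_singleton]; exact hym
    rw [hm_closed.closure_eq] at this
    exact congrArg Subtype.val this
  · rw [closure_subtype, image_singleton] at hmp
    exact hmp

theorem subset_of_specMin_subset [T0Space X] {K U : Set X} (hK : IsCompact K) (hU : IsOpen U)
    (hMU : specMin K ⊆ U) : K ⊆ U := by
  intro p hp
  obtain ⟨m, hm, hmp⟩ := hK.exists_mem_specMin_specLE hp
  exact hU.mem_of_specLE hmp (hMU hm)

end Specialization

namespace KS

variable [TopologicalSpace X]

theorem isTopologicalBasis :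
    TopologicalSpace.IsTopologicalBasis
      {S | ∃ U : Set X, IsOpen U ∧ S = {K : KS X | (K : Set X) ⊆ U}} where
  exists_subset_inter := by
    rintro _ ⟨U, hU, rfl⟩ _ ⟨V, hV, rfl⟩ K hK
    exact ⟨_, ⟨U ∩ V, hU.inter hV, rfl⟩, subset_inter_iff.2 hK, fun L hL => subset_inter_iff.1 hL⟩
  sUnion_eq := sUnion_eq_univ_iff.2 fun K => ⟨_, ⟨univ, isOpen_univ, rfl⟩, subset_univ _⟩
  eq_generateFrom := rfl

theorem nhds_hasBasis (K : KS X) :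
    (𝓝 K).HasBasis (fun U : Set X => IsOpen U ∧ (K : Set X) ⊆ U)
      fun U => {L : KS X | (L : Set X) ⊆ U} :=
  isTopologicalBasis.nhds_hasBasis.to_hasBasis
    (by rintro _ ⟨⟨U, hU, rfl⟩, hKU⟩; exact ⟨U, ⟨hU, hKU⟩, subset_rfl⟩)
    fun U hU => ⟨_, ⟨⟨U, hU.1, rfl⟩, hU.2⟩, subset_rfl⟩

theorem isCountablyGenerated_nhds [T0Space X] [FirstCountableTopology X] (K : KS X)
    (hK : (specMin (K : Set X)).Countable) : (𝓝 K).IsCountablyGenerated := by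
  have : Countable (specMin (K : Set X)) := hK.to_subtype
  choose B hB hB_basis using fun m : specMin (K : Set X) =>
    (nhds_basis_opens (m : X)).exists_antitone_subbasis
  set cover : Finset (specMin (K : Set X) × ℕ) → Set X := fun F => ⋃ q ∈ F, B q.1 q.2
  have hcover_open (F) : IsOpen (cover F) := isOpen_biUnion fun q _ => (hB q.1 q.2).2
  refine Filter.HasBasis.isCountablyGenerated (ι := Finset (specMin (K : Set X) × ℕ))
    (p := fun F => (K : Set X) ⊆ cover F) (s := fun F => {L : KS X | (L : Set X) ⊆ cover F}) ?_
  refine (nhds_hasBasis K).to_hasBasis (fun U ⟨hU, hKU⟩ => ?_)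
    fun F hF => ⟨cover F, ⟨hcover_open F, hF⟩, subset_rfl⟩
  choose n hn using fun m : specMin (K : Set X) =>
    (hB_basis m).mem_iff.1 (hU.mem_nhds (hKU m.2.1))
  have hKc : IsCompact (K : Set X) := K.2.2.1
  have hK_cover : (K : Set X) ⊆ ⋃ m, B m (n m) :=
    subset_of_specMin_subset hKc (isOpen_iUnion fun m => (hB m (n m)).2)
      fun m hm => mem_iUnion.2 ⟨⟨m, hm⟩, (hB _ _).1⟩
  obtain ⟨t, ht⟩ := hKc.elim_finite_subcover _ (fun m => (hB m (n m)).2) hK_cover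
  classical
  refine ⟨t.image fun m => (m, n m), ?_, fun L (hL : (L : Set X) ⊆ _) => hL.trans ?_⟩
  · simpa only [cover, Finset.set_biUnion_finset_image] using ht
  · simpa only [cover, Finset.set_biUnion_finset_image] using iUnion₂_subset fun m _ => hn m

end KS

/-- if `X` is a first-countable T0 space in which `min K` is countable for
every nonempty compact saturated `K`, then the Smyth power space of `X` is
first-countable. -/
theorem stmt18 {X : Type u} [TopologicalSpace X] [T0Space X]
    [FirstCountableTopology X]
    (hmin : ∀ K ∈ KSet X, ({x ∈ K | ∀ y ∈ K, specLE y x → y = x} : Set X).Countable) :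
    FirstCountableTopology (KS X) :=
  ⟨fun K => KS.isCountablyGenerated_nhds K (hmin K K.2)⟩
end

section
/- A retract of a strong d-space is a strong d-space. That is, if X is a strong d-space, Y is a T0 space, and there exist continuous maps f : X → Y and g : Y → X with f ∘ g = id_Y, then Y is a strong d-space. -/
open Set Topology

universe u

variable {X : Type u}

/-- Strong d-space. -/
def IsStrongDSpace (X : Type u) [TopologicalSpace X] : Prop :=
  T0Space X ∧ ∀ D : Set X, dirOn D → ∀ (x : X) (U : Set X), IsOpen U →
    (⋂ d ∈ D, uClo {d} ∩ uClo {x}) ⊆ U → ∃ d ∈ D, uClo {d} ∩ uClo {x} ⊆ U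

/-! Continuous maps preserve the specialization order, so `g` carries the directed set `D` and
the sets `↑d ∩ ↑y` into `X`, and `f` carries them back. Applying the strong d-space property of
`X` to `g '' D`, `g y` and `f ⁻¹' U` and pulling the resulting `d` back along `f ∘ g = id`
gives the property for `Y`. -/

section Specialization

variable {X Y : Type*} [TopologicalSpace X] [TopologicalSpace Y]

theorem specLE_iff_specializes_s19 {a b : X} : specLE a b ↔ b ⤳ a :=
  specializes_iff_mem_closure.symm

theorem specLE.map {h : X → Y} (hh : Continuous h) {a b : X} (hab : specLE a b) :
    specLE (h a) (h b) :=
  specLE_iff_specializes_s19.2 ((specLE_iff_specializes_s19.1 hab).map hh)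

theorem mem_uClo_singleton {a z : X} : z ∈ uClo {a} ↔ specLE a z := by
  simp [uClo]

theorem dirOn.image {h : X → Y} (hh : Continuous h) {D : Set X} (hD : dirOn D) :
    dirOn (h '' D) := by
  obtain ⟨hne, hdir⟩ := hD
  refine ⟨hne.image h, ?_⟩
  rintro _ ⟨a, ha, rfl⟩ _ ⟨b, hb, rfl⟩
  obtain ⟨c, hc, hac, hbc⟩ := hdir a ha b hb
  exact ⟨h c, mem_image_of_mem h hc, hac.map hh, hbc.map hh⟩

theorem mapsTo_uClo_inter {h : X → Y} (hh : Continuous h) (a b : X) :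
    MapsTo h (uClo {a} ∩ uClo {b}) (uClo {h a} ∩ uClo {h b}) := by
  rintro z ⟨hza, hzb⟩
  rw [mem_uClo_singleton] at hza hzb
  exact ⟨mem_uClo_singleton.2 (hza.map hh), mem_uClo_singleton.2 (hzb.map hh)⟩

end Specialization

/-- a retract of a strong d-space is a strong d-space. -/
theorem stmt19 {X : Type*} {Y : Type*} [TopologicalSpace X] [TopologicalSpace Y]
    [T0Space Y] (hX : IsStrongDSpace X) (f : X → Y) (g : Y → X)
    (hf : Continuous f) (hg : Continuous g) (hfg : f ∘ g = id) :
    IsStrongDSpace Y := by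
  refine ⟨inferInstance, fun D hD y U hU hsub => ?_⟩
  have hfg' : ∀ z, f (g z) = z := congrFun hfg
  have hcap : (⋂ d ∈ g '' D, uClo {d} ∩ uClo {g y}) ⊆ f ⁻¹' U := by
    intro x hx
    refine hsub (mem_iInter₂.2 fun d hd => ?_)
    simpa only [hfg'] using
      mapsTo_uClo_inter hf (g d) (g y) (mem_iInter₂.1 hx (g d) (mem_image_of_mem g hd))
  obtain ⟨_, ⟨d, hd, rfl⟩, hdU⟩ := hX.2 _ (hD.image hg) (g y) _ (hU.preimage hf) hcap
  exact ⟨d, hd, fun z hz => hfg' z ▸ hdU (mapsTo_uClo_inter hg d y hz)⟩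
end
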